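/- arXiv:1910.05855 — 7 statements merged into one kernel-verified Lean document; each statement's English description precedes it below -/
import Mathlib

section
/- Let H be a subgroup of G = F × A. Then H is isomorphic, as a group, to the direct product Hπ × L_H of its projection to the free factor and its intersection with A. In particular, since Hπ is a subgroup of a free group and hence free (Nielsen–Schreier), every subgroup of a free-times-abelian group is itself isomorphic to a direct product of a free group and a subgroup of A. -/
/-- Any subgroup `H ≤ F × A` (with `F` free and `A` finitely generated
abelian) is isomorphic to the direct product of its projection `Hπ` to the free factor
and its intersection `L_H = H ∩ A` with the abelian factor; in particular (by
Nielsen–Schreier) it is the direct product of a free group and a subgroup of `A`. -/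
theorem subgroup_of_free_times_abelian_iso_prod
    (F A : Type) [Group F] [IsFreeGroup F] [CommGroup A] [Group.FG A]
    (H : Subgroup (F × A)) :
    Nonempty (H ≃* (H.map (MonoidHom.fst F A)) × (H.comap (MonoidHom.inr F A))) ∧
    IsFreeGroup (H.map (MonoidHom.fst F A)) := by
  classical
  refine ⟨?_, inferInstance⟩
  set P := H.map (MonoidHom.fst F A) with hP
  set L := H.comap (MonoidHom.inr F A) with hL
  -- the projection H →* P
  set φ : H →* P := (MonoidHom.fst F A).subgroupMap H with hφ
  have hφsurj : Function.Surjective φ := (MonoidHom.fst F A).subgroupMap_surjective H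
  -- coercion of φ
  have hφval : ∀ h : H, ((φ h : F)) = (h : F × A).1 := fun h => rfl
  -- section ψ of φ, using freeness of P
  set ψ : P →* H := IsFreeGroup.lift (fun i => (hφsurj (IsFreeGroup.of i)).choose) with hψ
  have hsec : ∀ x : P, φ (ψ x) = x := by
    intro x
    have : φ.comp ψ = MonoidHom.id P := by
      apply IsFreeGroup.ext_hom
      intro a
      simp only [MonoidHom.comp_apply, MonoidHom.id_apply, hψ, IsFreeGroup.lift_of]
      exact (hφsurj (IsFreeGroup.of a)).choose_spec
    exact DFunLike.congr_fun this x
  -- inclusion L →* H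
  have ιmem : ∀ a : L, ((1 : F), (a : A)) ∈ H := fun a => a.2
  set ι : L →* H := MonoidHom.mk' (fun a => ⟨((1 : F), (a : A)), ιmem a⟩)
    (by intro a b; ext : 1; simp [Prod.ext_iff]) with hι
  have hcent : ∀ (a : L) (h : H), ι a * h = h * ι a := by
    intro a h
    ext : 1
    show ((1 : F), (a : A)) * (h : F × A) = (h : F × A) * ((1 : F), (a : A))
    exact Prod.ext (by simp) (by simp [mul_comm])
  -- the hom θ : P × L →* H
  set θ : P × L →* H := MonoidHom.mk' (fun x => ψ x.1 * ι x.2) (by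
    intro x y
    simp only [Prod.fst_mul, Prod.snd_mul, map_mul]
    rw [mul_assoc, ← mul_assoc (ψ y.1), ← hcent x.2 (ψ y.1), mul_assoc, mul_assoc]) with hθ
  have hφι : ∀ a : L, φ (ι a) = 1 := by
    intro a
    ext
    show (((1:F), (a:A)) : F × A).1 = (1 : F)
    rfl
  -- inverse map σ
  have hker1 : ∀ h : H, (((ψ (φ h))⁻¹ * h : H) : F × A).1 = 1 := by
    intro h
    have h1 : ((ψ (φ h) : H) : F × A).1 = (h : F × A).1 := by
      have := hsec (φ h)
      calc ((ψ (φ h) : H) : F × A).1 = ((φ (ψ (φ h)) : F)) := rfl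
        _ = ((φ h : F)) := by rw [this]
        _ = (h : F × A).1 := rfl
    simp [Subgroup.coe_mul, h1]
  have hmemL : ∀ h : H, (((ψ (φ h))⁻¹ * h : H) : F × A).2 ∈ L := by
    intro h
    show ((1 : F), (((ψ (φ h))⁻¹ * h : H) : F × A).2) ∈ H
    have : ((1 : F), (((ψ (φ h))⁻¹ * h : H) : F × A).2) = (((ψ (φ h))⁻¹ * h : H) : F × A) :=
      Prod.ext (hker1 h).symm rfl
    rw [this]; exact ((ψ (φ h))⁻¹ * h).2
  set σ : H → P × L := fun h => (φ h, ⟨(((ψ (φ h))⁻¹ * h : H) : F × A).2, hmemL h⟩) with hσ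
  have hθσ : ∀ h : H, θ (σ h) = h := by
    intro h
    show ψ (φ h) * ι ⟨(((ψ (φ h))⁻¹ * h : H) : F × A).2, hmemL h⟩ = h
    have : ι ⟨(((ψ (φ h))⁻¹ * h : H) : F × A).2, hmemL h⟩ = (ψ (φ h))⁻¹ * h := by
      ext : 1
      show ((1 : F), (((ψ (φ h))⁻¹ * h : H) : F × A).2) = (((ψ (φ h))⁻¹ * h : H) : F × A)
      exact Prod.ext (hker1 h).symm rfl
    rw [this, ← mul_assoc, mul_inv_cancel, one_mul]
  have hσθ : ∀ x : P × L, σ (θ x) = x := by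
    intro x
    have hfst : φ (θ x) = x.1 := by
      show φ (ψ x.1 * ι x.2) = x.1
      rw [map_mul, hsec, hφι, mul_one]
    refine Prod.ext hfst (Subtype.ext ?_)
    show (((ψ (φ (θ x)))⁻¹ * θ x : H) : F × A).2 = (x.2 : A)
    rw [hfst]
    have : (ψ x.1)⁻¹ * θ x = ι x.2 := by
      show (ψ x.1)⁻¹ * (ψ x.1 * ι x.2) = ι x.2
      rw [← mul_assoc, inv_mul_cancel, one_mul]
    rw [this]
    rfl
  exact ⟨(MulEquiv.mk ⟨θ, σ, hσθ, hθσ⟩ (map_mul θ)).symm⟩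
end

section
/- For every finitely generated subgroup H of G = F × A, the rank of H (the minimal cardinality of a generating set) equals the rank of Hπ plus the rank of L_H; that is, rk(H) = rk(Hπ) + rk(H ∩ A). -/
/-!
`Hπ` is free (Nielsen–Schreier), so the projection `H → Hπ` splits; its kernel `L = H ∩ A` is
central, hence `H ≅ Hπ × L` and subadditivity of rank gives `≤`. For `≥`, abelianize the free
factor: `n` generators of `Hπ × L` give generators of `ℤ^r × L` with `r ≥ rk Hπ`. Lifting to `ℤ^n`,
rank–nullity over `ℤ` shows that the kernel of the projection onto `ℤ^r` is generated by `n - r`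
elements, and that kernel maps onto `L`.
-/

open Function Module

theorem AddMonoidHom.exists_finset_card_add_finrank_le_and_closure_eq_ker
    {M N : Type*} [AddCommGroup M] [AddCommGroup N] [Module.Free ℤ N] [Module.Finite ℤ N]
    (f : M →+ N) (hf : Surjective f) (S : Finset M) (hS : AddSubgroup.closure (S : Set M) = ⊤) :
    ∃ T : Finset M, T.card + finrank ℤ N ≤ S.card ∧ AddSubgroup.closure (T : Set M) = f.ker := by
  classical
  let φ : (S → ℤ) →ₗ[ℤ] M := Fintype.linearCombination ℤ ((↑) : S → M)
  have hφ : Surjective φ := by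
    rw [← LinearMap.range_eq_top, Fintype.range_linearCombination, Subtype.range_coe,
      ← Submodule.toAddSubgroup_inj, Submodule.span_int_eq_addSubgroupClosure, hS]
    rfl
  let g := f.toIntLinearMap ∘ₗ φ
  have hg : Surjective g := hf.comp hφ
  let b := Module.finBasis ℤ (LinearMap.ker g)
  let T : Finset M := Finset.univ.image fun i => φ (b i)
  have hrank : finrank ℤ (LinearMap.ker g) + finrank ℤ N = S.card := by
    rw [← (LinearMap.quotKerEquivOfSurjective g hg).finrank_eq, add_comm,
      Submodule.finrank_quotient_add_finrank, Module.finrank_fintype_fun_eq_card,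
      Fintype.card_coe]
  have hspan : Submodule.span ℤ (T : Set M) = LinearMap.ker f.toIntLinearMap := by
    have hT : (T : Set M) = (φ ∘ₗ (LinearMap.ker g).subtype) '' Set.range b := by
      simp only [T, Finset.coe_image, Finset.coe_univ, Set.image_univ, ← Set.range_comp]
      rfl
    rw [hT, ← Submodule.map_span, b.span_eq, Submodule.map_top, LinearMap.range_comp,
      Submodule.range_subtype, LinearMap.ker_comp, Submodule.map_comap_eq_of_surjective hφ]
  refine ⟨T, ?_, ?_⟩
  · have : T.card ≤ finrank ℤ (LinearMap.ker g) :=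
      Finset.card_image_le.trans (by simp)
    omega
  · rw [← Submodule.span_int_eq_addSubgroupClosure, hspan, AddMonoidHom.coe_toIntLinearMap_ker]
    rfl

theorem MonoidHom.exists_finset_card_add_finrank_le_and_closure_eq_ker
    {M N : Type*} [CommGroup M] [CommGroup N] [Module.Free ℤ (Additive N)]
    [Module.Finite ℤ (Additive N)] (f : M →* N) (hf : Surjective f) (S : Finset M)
    (hS : Subgroup.closure (S : Set M) = ⊤) :
    ∃ T : Finset M, T.card + finrank ℤ (Additive N) ≤ S.card ∧
      Subgroup.closure (T : Set M) = f.ker := by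
  have hS' : AddSubgroup.closure ((S.map Additive.ofMul.toEmbedding : Finset (Additive M)) :
      Set (Additive M)) = ⊤ := by
    rw [Finset.coe_map, Equiv.coe_toEmbedding, Equiv.image_eq_preimage_symm,
      Additive.ofMul_symm_eq, ← Subgroup.toAddSubgroup_closure, hS]
    rfl
  obtain ⟨T, hcard, hT⟩ := (MonoidHom.toAdditive f)
    |>.exists_finset_card_add_finrank_le_and_closure_eq_ker hf _ hS'
  refine ⟨T.map Additive.toMul.toEmbedding, by simpa using hcard, ?_⟩
  apply Subgroup.toAddSubgroup.injective
  rw [Subgroup.toAddSubgroup_closure, Finset.coe_map, Equiv.coe_toEmbedding,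
    Equiv.preimage_image, hT]
  rfl

noncomputable def IsFreeGroup.abelianizationLinearEquiv (Q : Type*) [Group Q] [IsFreeGroup Q] :
    Additive (Abelianization Q) ≃ₗ[ℤ] FreeAbelianGroup (IsFreeGroup.Generators Q) :=
  (MulEquiv.toAdditive (IsFreeGroup.toFreeGroup Q).abelianizationCongr).toIntLinearEquiv

instance Abelianization.instModuleFreeIntAdditive (Q : Type*) [Group Q] [IsFreeGroup Q] :
    Module.Free ℤ (Additive (Abelianization Q)) :=
  .of_equiv (IsFreeGroup.abelianizationLinearEquiv Q).symm

instance Abelianization.instModuleFiniteIntAdditive (Q : Type*) [Group Q] [Group.FG Q] :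
    Module.Finite ℤ (Additive (Abelianization Q)) :=
  have : Group.FG (Abelianization Q) :=
    Group.fg_of_surjective (f := Abelianization.of) QuotientGroup.mk_surjective
  Module.Finite.iff_addGroup_fg.mpr (AddGroup.fg_iff_mul_fg.mpr this)

theorem IsFreeGroup.rank_le_finrank_abelianization (Q : Type*) [Group Q] [IsFreeGroup Q]
    [Group.FG Q] : Group.rank Q ≤ finrank ℤ (Additive (Abelianization Q)) := by
  classical
  let X := IsFreeGroup.Generators Q
  let b : Basis X ℤ (Additive (Abelianization Q)) :=
    (FreeAbelianGroup.basis X).map (IsFreeGroup.abelianizationLinearEquiv Q).symm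
  have : Finite X := Module.Finite.finite_basis b
  have := Fintype.ofFinite X
  have hgen : Subgroup.closure ((Finset.univ.image (FreeGroup.of : X → FreeGroup X) :
      Finset _) : Set (FreeGroup X)) = ⊤ := by
    rw [Finset.coe_image, Finset.coe_univ, Set.image_univ, FreeGroup.closure_range_of]
  calc Group.rank Q = Group.rank (FreeGroup X) := Group.rank_congr (IsFreeGroup.toFreeGroup Q)
    _ ≤ (Finset.univ.image (FreeGroup.of : X → FreeGroup X)).card := Group.rank_le hgen
    _ ≤ Fintype.card X := Finset.card_image_le.trans_eq Finset.card_univ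
    _ = finrank ℤ (Additive (Abelianization Q)) := (finrank_eq_card_basis b).symm

theorem Group.rank_prod_le_add (G G' : Type*) [Group G] [Group G'] [Group.FG G] [Group.FG G'] :
    Group.rank (G × G') ≤ Group.rank G + Group.rank G' := by
  classical
  obtain ⟨S, hScard, hS⟩ := Group.rank_spec G
  obtain ⟨T, hTcard, hT⟩ := Group.rank_spec G'
  let U := S.image (MonoidHom.inl G G') ∪ T.image (MonoidHom.inr G G')
  have hU : Subgroup.closure (U : Set (G × G')) = ⊤ := by
    rw [eq_top_iff, ← Subgroup.top_prod_top, Subgroup.prod_le_iff, ← hS, ← hT,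
      MonoidHom.map_closure, MonoidHom.map_closure, Finset.coe_union, Finset.coe_image,
      Finset.coe_image]
    exact ⟨Subgroup.closure_mono Set.subset_union_left,
      Subgroup.closure_mono Set.subset_union_right⟩
  calc Group.rank (G × G') ≤ U.card := Group.rank_le hU
    _ ≤ S.card + T.card :=
      (Finset.card_union_le _ _).trans (add_le_add Finset.card_image_le Finset.card_image_le)
    _ = Group.rank G + Group.rank G' := by rw [hScard, hTcard]

theorem IsFreeGroup.rank_add_rank_le_rank_prod (Q L : Type*) [Group Q] [IsFreeGroup Q]
    [Group.FG Q] [CommGroup L] [Group.FG L] :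
    Group.rank Q + Group.rank L ≤ Group.rank (Q × L) := by
  classical
  obtain ⟨S, hScard, hS⟩ := Group.rank_spec (Q × L)
  let β : Q × L →* Abelianization Q × L := Abelianization.of.prodMap (MonoidHom.id L)
  have hβ : Surjective β := QuotientGroup.mk_surjective.prodMap surjective_id
  have hβS : Subgroup.closure ((S.image β : Finset _) : Set (Abelianization Q × L)) = ⊤ := by
    rw [Finset.coe_image, ← MonoidHom.map_closure, hS, Subgroup.map_top_of_surjective _ hβ]
  obtain ⟨T, hTcard, hT⟩ := (MonoidHom.fst (Abelianization Q) L)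
    |>.exists_finset_card_add_finrank_le_and_closure_eq_ker Prod.fst_surjective _ hβS
  have hTL : Subgroup.closure ((T.image Prod.snd : Finset L) : Set L) = ⊤ := by
    rw [Finset.coe_image, ← MonoidHom.coe_snd, ← MonoidHom.map_closure, hT, eq_top_iff]
    exact fun l _ => ⟨(1, l), MonoidHom.mem_ker.2 rfl, rfl⟩
  calc Group.rank Q + Group.rank L ≤ finrank ℤ (Additive (Abelianization Q)) + T.card :=
        add_le_add (IsFreeGroup.rank_le_finrank_abelianization Q)
          ((Group.rank_le hTL).trans Finset.card_image_le)
    _ ≤ (S.image β).card := by omega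
    _ ≤ S.card := Finset.card_image_le
    _ = Group.rank (Q × L) := hScard

theorem IsFreeGroup.exists_rightInverse_of_surjective {G Q : Type*} [Group G] [Group Q]
    [IsFreeGroup Q] (f : G →* Q) (hf : Surjective f) : ∃ σ : Q →* G, f.comp σ = MonoidHom.id Q :=
  ⟨IsFreeGroup.lift fun x => surjInv hf (IsFreeGroup.of x),
    IsFreeGroup.ext_hom fun x => by simp [surjInv_eq hf]⟩

theorem MonoidHom.noncommCoprod_bijective {N Q G : Type*} [Group N] [Group Q] [Group G]
    {f : G →* Q} {σ : Q →* G} {ι : N →* G} (hσ : f.comp σ = MonoidHom.id Q) (hι : Injective ι)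
    (hrange : ι.range = f.ker) (comm : ∀ q n, Commute (σ q) (ι n)) :
    Bijective (σ.noncommCoprod ι comm) := by
  have hfσ : ∀ q, f (σ q) = q := DFunLike.congr_fun hσ
  have hfι : ∀ n, f (ι n) = 1 := fun n => (hrange ▸ ⟨n, rfl⟩ : ι n ∈ f.ker)
  refine ⟨(injective_iff_map_eq_one _).2 ?_, fun g => ?_⟩
  · rintro ⟨q, n⟩ h
    have hq : q = 1 := by simpa [hfσ, hfι] using congrArg f h
    subst hq
    simp only [noncommCoprod_apply, map_one, one_mul] at h
    simp [(injective_iff_map_eq_one ι).1 hι n h]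
  · obtain ⟨n, hn⟩ : (σ (f g))⁻¹ * g ∈ ι.range := by
      rw [hrange, mem_ker, map_mul, map_inv, hfσ, inv_mul_cancel]
    exact ⟨(f g, n), by simp [hn]⟩

theorem MonoidHom.subgroupComap_injective {G G' : Type*} [Group G] [Group G'] {f : G →* G'}
    (hf : Injective f) (H : Subgroup G') : Injective (f.subgroupComap H) :=
  fun _ _ h => Subtype.ext (hf (congrArg Subtype.val h))

theorem Subgroup.range_inr_subgroupComap_eq_ker_fst_subgroupMap {G A : Type*} [Group G] [Group A]
    (H : Subgroup (G × A)) :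
    ((MonoidHom.inr G A).subgroupComap H).range = ((MonoidHom.fst G A).subgroupMap H).ker := by
  ext ⟨⟨w, a⟩, hh⟩
  simp only [MonoidHom.mem_range, MonoidHom.mem_ker, Subtype.ext_iff]
  constructor
  · rintro ⟨l, hl⟩
    exact (congrArg Prod.fst hl).symm
  · rintro (rfl : w = 1)
    exact ⟨⟨a, hh⟩, rfl⟩

theorem rank_subgroup_eq_rank_proj_add_rank_abelian_part_general
    (F A : Type) [Group F] [IsFreeGroup F] [CommGroup A]
    (H : Subgroup (F × A))
    [Group.FG H] [Group.FG (H.map (MonoidHom.fst F A))]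
    [Group.FG (H.comap (MonoidHom.inr F A))] :
    Group.rank H =
      Group.rank (H.map (MonoidHom.fst F A)) + Group.rank (H.comap (MonoidHom.inr F A)) := by
  obtain ⟨σ, hσ⟩ := IsFreeGroup.exists_rightInverse_of_surjective _
    ((MonoidHom.fst F A).subgroupMap_surjective H)
  have hcentral : ∀ p l, Commute (σ p) ((MonoidHom.inr F A).subgroupComap H l) := fun _ _ =>
    Submonoid.commute_coe_coe.1 ((Commute.one_right _).prod (Commute.all _ _))
  let e := MulEquiv.ofBijective _ <| MonoidHom.noncommCoprod_bijective hσ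
    (MonoidHom.subgroupComap_injective (Prod.mk_right_injective 1) H)
    (Subgroup.range_inr_subgroupComap_eq_ker_fst_subgroupMap H) hcentral
  rw [← Group.rank_congr e]
  exact le_antisymm (Group.rank_prod_le_add _ _) (IsFreeGroup.rank_add_rank_le_rank_prod _ _)

/-- For a finitely generated subgroup `H ≤ F × A`,
`rk H = rk (Hπ) + rk (H ∩ A)`. -/
theorem rank_subgroup_eq_rank_proj_add_rank_abelian_part
    (F A : Type) [Group F] [IsFreeGroup F] [CommGroup A] [Group.FG A]
    (H : Subgroup (F × A)) (hH : H.FG)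
    [Group.FG H] [Group.FG (H.map (MonoidHom.fst F A))]
    [Group.FG (H.comap (MonoidHom.inr F A))] :
    Group.rank H =
      Group.rank (H.map (MonoidHom.fst F A)) + Group.rank (H.comap (MonoidHom.inr F A)) :=
  rank_subgroup_eq_rank_proj_add_rank_abelian_part_general F A H
end

section
/- Let H1, H2 be finitely generated subgroups of G = F × A and set K := H1π ∩ H2π ≤ F. Then the derived (commutator) subgroup [K,K] is contained in (H1 ∩ H2)π; consequently (H1 ∩ H2)π is a normal subgroup of K and the quotient K/(H1 ∩ H2)π is abelian. -/
/-! Since `A` is abelian, the commutator of any lifts of `x, y ∈ Hᵢπ` to `Hᵢ` is `(⁅x, y⁆, 1)`,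
independently of the lifts; so `⁅x, y⁆` has the common lift `(⁅x, y⁆, 1) ∈ H₁ ∩ H₂`. -/

open scoped commutatorElement

theorem Prod.commutatorElement_eq_mk_one {G A : Type*} [Group G] [CommGroup A] (p q : G × A) :
    ⁅p, q⁆ = (⁅p.1, q.1⁆, 1) :=
  Prod.ext rfl (commutatorElement_eq_one_iff_commute.mpr (Commute.all _ _))

namespace Subgroup

variable {G : Type*} [Group G]

theorem commutatorElement_mem {H : Subgroup G} {g h : G} (hg : g ∈ H) (hh : h ∈ H) :
    ⁅g, h⁆ ∈ H :=
  H.mul_mem (H.mul_mem (H.mul_mem hg hh) (H.inv_mem hg)) (H.inv_mem hh)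

theorem normal_subgroupOf_of_commutator_le {M K : Subgroup G} (h : ⁅K, K⁆ ≤ M) :
    (M.subgroupOf K).Normal := by
  refine ⟨fun n hn g => ?_⟩
  rw [mem_subgroupOf] at hn ⊢
  have hconj : ((g * n * g⁻¹ : K) : G) = ⁅(g : G), (n : G)⁆ * n := by
    push_cast
    group
  rw [hconj]
  exact M.mul_mem (commutator_le.mp h _ g.2 _ n.2) hn

theorem mk_mul_comm_of_commutator_le {M K : Subgroup G} (h : ⁅K, K⁆ ≤ M) (x y : K) :
    (QuotientGroup.mk (x * y) : K ⧸ M.subgroupOf K) = QuotientGroup.mk (y * x) := by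
  rw [QuotientGroup.eq, mem_subgroupOf]
  have hcomm : (((x * y)⁻¹ * (y * x) : K) : G) = ⁅(y : G)⁻¹, (x : G)⁻¹⁆ := by
    push_cast
    group
  rw [hcomm]
  exact commutator_le.mp h _ (K.inv_mem y.2) _ (K.inv_mem x.2)

variable {A : Type*} [CommGroup A]

theorem mk_commutatorElement_one_mem {H : Subgroup (G × A)} {x y : G}
    (hx : x ∈ H.map (MonoidHom.fst G A)) (hy : y ∈ H.map (MonoidHom.fst G A)) :
    (⁅x, y⁆, (1 : A)) ∈ H := by
  obtain ⟨p, hp, rfl⟩ := hx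
  obtain ⟨q, hq, rfl⟩ := hy
  simpa only [Prod.commutatorElement_eq_mk_one, MonoidHom.coe_fst] using commutatorElement_mem hp hq

theorem commutator_inf_map_fst_le_map_fst_inf (H₁ H₂ : Subgroup (G × A)) :
    ⁅H₁.map (MonoidHom.fst G A) ⊓ H₂.map (MonoidHom.fst G A),
      H₁.map (MonoidHom.fst G A) ⊓ H₂.map (MonoidHom.fst G A)⁆ ≤
        (H₁ ⊓ H₂).map (MonoidHom.fst G A) :=
  commutator_le.mpr fun x hx y hy =>
    ⟨(⁅x, y⁆, 1), ⟨mk_commutatorElement_one_mem hx.1 hy.1, mk_commutatorElement_one_mem hx.2 hy.2⟩,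
      rfl⟩

end Subgroup

theorem commutator_le_proj_inter_general
    (F A : Type) [Group F] [CommGroup A]
    (H1 H2 : Subgroup (F × A)) :
    ⁅H1.map (MonoidHom.fst F A) ⊓ H2.map (MonoidHom.fst F A),
      H1.map (MonoidHom.fst F A) ⊓ H2.map (MonoidHom.fst F A)⁆ ≤
        (H1 ⊓ H2).map (MonoidHom.fst F A) ∧
    (((H1 ⊓ H2).map (MonoidHom.fst F A)).subgroupOf
      (H1.map (MonoidHom.fst F A) ⊓ H2.map (MonoidHom.fst F A))).Normal ∧
    ∀ x y : (H1.map (MonoidHom.fst F A) ⊓ H2.map (MonoidHom.fst F A) : Subgroup F),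
      (QuotientGroup.mk (x * y) :
          (H1.map (MonoidHom.fst F A) ⊓ H2.map (MonoidHom.fst F A) : Subgroup F) ⧸
            ((H1 ⊓ H2).map (MonoidHom.fst F A)).subgroupOf
              (H1.map (MonoidHom.fst F A) ⊓ H2.map (MonoidHom.fst F A))) =
        QuotientGroup.mk (y * x) := by
  have hle := Subgroup.commutator_inf_map_fst_le_map_fst_inf H1 H2
  exact ⟨hle, Subgroup.normal_subgroupOf_of_commutator_le hle,
    Subgroup.mk_mul_comm_of_commutator_le hle⟩

/-- For finitely generated subgroups `H1, H2 ≤ F × A` and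
`K = H1π ∩ H2π`, the commutator subgroup `[K,K]` is contained in `(H1 ∩ H2)π`;
consequently `(H1 ∩ H2)π` is normal in `K` and the quotient `K/(H1 ∩ H2)π` is
abelian. -/
theorem commutator_le_proj_inter
    (F A : Type) [Group F] [IsFreeGroup F] [CommGroup A] [Group.FG A]
    (H1 H2 : Subgroup (F × A)) (hH1 : H1.FG) (hH2 : H2.FG) :
    ⁅H1.map (MonoidHom.fst F A) ⊓ H2.map (MonoidHom.fst F A),
      H1.map (MonoidHom.fst F A) ⊓ H2.map (MonoidHom.fst F A)⁆ ≤
        (H1 ⊓ H2).map (MonoidHom.fst F A) ∧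
    (((H1 ⊓ H2).map (MonoidHom.fst F A)).subgroupOf
      (H1.map (MonoidHom.fst F A) ⊓ H2.map (MonoidHom.fst F A))).Normal ∧
    ∀ x y : (H1.map (MonoidHom.fst F A) ⊓ H2.map (MonoidHom.fst F A) : Subgroup F),
      (QuotientGroup.mk (x * y) :
          (H1.map (MonoidHom.fst F A) ⊓ H2.map (MonoidHom.fst F A) : Subgroup F) ⧸
            ((H1 ⊓ H2).map (MonoidHom.fst F A)).subgroupOf
              (H1.map (MonoidHom.fst F A) ⊓ H2.map (MonoidHom.fst F A))) =
        QuotientGroup.mk (y * x) :=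
  commutator_le_proj_inter_general F A H1 H2
end

section
/- Let H1, H2 be subgroups of G = F × A, let K := H1π ∩ H2π ≤ F, and let L := L_{H1}·L_{H2} ≤ A be the subgroup of A generated by L_{H1} and L_{H2}. Then there is a group homomorphism Φ : K → A/L such that for every w ∈ K and every a ∈ C_{H1}(w), b ∈ C_{H2}(w) one has Φ(w) = (a b^{-1})·L, and the kernel of Φ is exactly (H1 ∩ H2)π. In particular (H1 ∩ H2)π is normal in K and the quotient K/(H1 ∩ H2)π embeds into A/L. -/
/-- For subgroups `H1, H2 ≤ F × A`, `K = H1π ∩ H2π` and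
`L = L_{H1}·L_{H2}`, there is a homomorphism `Φ : K → A/L` with
`Φ(w) = (a b⁻¹)·L` whenever `a ∈ C_{H1}(w)` and `b ∈ C_{H2}(w)`, whose kernel is
exactly `(H1 ∩ H2)π`; in particular `(H1 ∩ H2)π` is normal in `K` and `K/(H1 ∩ H2)π`
embeds into `A/L`. -/
theorem difference_hom_exists
    (F A : Type) [Group F] [IsFreeGroup F] [CommGroup A] [Group.FG A]
    (H1 H2 : Subgroup (F × A)) :
    ∃ Φ : (H1.map (MonoidHom.fst F A) ⊓ H2.map (MonoidHom.fst F A) : Subgroup F) →*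
        A ⧸ (H1.comap (MonoidHom.inr F A) ⊔ H2.comap (MonoidHom.inr F A)),
      (∀ (w : (H1.map (MonoidHom.fst F A) ⊓ H2.map (MonoidHom.fst F A) : Subgroup F))
          (a b : A), ((w : F), a) ∈ H1 → ((w : F), b) ∈ H2 →
            Φ w = QuotientGroup.mk (a * b⁻¹)) ∧
      (∀ w, w ∈ Φ.ker ↔ (w : F) ∈ (H1 ⊓ H2).map (MonoidHom.fst F A)) ∧
      (((H1 ⊓ H2).map (MonoidHom.fst F A)).subgroupOf
        (H1.map (MonoidHom.fst F A) ⊓ H2.map (MonoidHom.fst F A))).Normal := by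
  classical
  set K : Subgroup F := H1.map (MonoidHom.fst F A) ⊓ H2.map (MonoidHom.fst F A) with hK
  set L : Subgroup A := H1.comap (MonoidHom.inr F A) ⊔ H2.comap (MonoidHom.inr F A) with hLdef
  have h1 : ∀ w : K, ∃ a : A, (((w : F)), a) ∈ H1 := by
    intro w
    obtain ⟨x, hx, hxw⟩ := (Subgroup.mem_inf.mp w.2).1
    exact ⟨x.2, by simpa [← hxw] using hx⟩
  have h2 : ∀ w : K, ∃ b : A, (((w : F)), b) ∈ H2 := by
    intro w
    obtain ⟨x, hx, hxw⟩ := (Subgroup.mem_inf.mp w.2).2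
    exact ⟨x.2, by simpa [← hxw] using hx⟩
  choose ca hca using h1
  choose cb hcb using h2
  -- well-definedness key lemma
  have key : ∀ (w : F) (a a' b b' : A), (w, a) ∈ H1 → (w, a') ∈ H1 →
      (w, b) ∈ H2 → (w, b') ∈ H2 →
      (QuotientGroup.mk (a * b⁻¹) : A ⧸ L) = QuotientGroup.mk (a' * b'⁻¹) := by
    intro w a a' b b' ha ha' hb hb'
    refine (QuotientGroup.eq).mpr ?_
    have hA : a⁻¹ * a' ∈ L := by
      refine le_sup_left (α := Subgroup A) ?_
      have : ((w, a) : F × A)⁻¹ * (w, a') ∈ H1 := H1.mul_mem (H1.inv_mem ha) ha'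
      simpa [Subgroup.mem_comap, Prod.ext_iff] using this
    have hB : b⁻¹ * b' ∈ L := by
      refine le_sup_right (α := Subgroup A) ?_
      have : ((w, b) : F × A)⁻¹ * (w, b') ∈ H2 := H2.mul_mem (H2.inv_mem hb) hb'
      simpa [Subgroup.mem_comap, Prod.ext_iff] using this
    have : (a * b⁻¹)⁻¹ * (a' * b'⁻¹) = (a⁻¹ * a') * (b⁻¹ * b')⁻¹ := by
      simp [mul_comm, mul_left_comm, mul_assoc]
    rw [this]
    exact L.mul_mem hA (L.inv_mem hB)
  have hmul : ∀ w₁ w₂ : K, (QuotientGroup.mk (ca (w₁ * w₂) * (cb (w₁ * w₂))⁻¹) : A ⧸ L)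
      = QuotientGroup.mk (ca w₁ * (cb w₁)⁻¹) * QuotientGroup.mk (ca w₂ * (cb w₂)⁻¹) := by
    intro w₁ w₂
    have ha : (((w₁ * w₂ : K) : F), ca w₁ * ca w₂) ∈ H1 := by
      simpa [Prod.ext_iff] using H1.mul_mem (hca w₁) (hca w₂)
    have hb : (((w₁ * w₂ : K) : F), cb w₁ * cb w₂) ∈ H2 := by
      simpa [Prod.ext_iff] using H2.mul_mem (hcb w₁) (hcb w₂)
    have := key ((w₁ * w₂ : K) : F) (ca (w₁ * w₂)) (ca w₁ * ca w₂)
      (cb (w₁ * w₂)) (cb w₁ * cb w₂) (hca _) ha (hcb _) hb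
    rw [this]
    have : (ca w₁ * ca w₂) * (cb w₁ * cb w₂)⁻¹
        = (ca w₁ * (cb w₁)⁻¹) * (ca w₂ * (cb w₂)⁻¹) := by
      simp [mul_comm, mul_left_comm, mul_assoc]
    rw [this, QuotientGroup.mk_mul]
  set Φ : K →* A ⧸ L := MonoidHom.mk' (fun w => QuotientGroup.mk (ca w * (cb w)⁻¹)) hmul
    with hΦ
  have hspec : ∀ (w : K) (a b : A), ((w : F), a) ∈ H1 → ((w : F), b) ∈ H2 →
      Φ w = QuotientGroup.mk (a * b⁻¹) := by
    intro w a b ha hb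
    exact key (w : F) (ca w) a (cb w) b (hca w) ha (hcb w) hb
  have hker : ∀ w : K, w ∈ Φ.ker ↔ (w : F) ∈ (H1 ⊓ H2).map (MonoidHom.fst F A) := by
    intro w
    constructor
    · intro hw
      have : (QuotientGroup.mk (ca w * (cb w)⁻¹) : A ⧸ L) = 1 := hw
      have hmem : ca w * (cb w)⁻¹ ∈ L := by
        rwa [← QuotientGroup.eq_one_iff]
      obtain ⟨y, hy, z, hz, hyz⟩ := Subgroup.mem_sup.mp hmem
      have hy1 : ((1 : F), y) ∈ H1 := hy
      have hz2 : ((1 : F), z) ∈ H2 := hz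
      refine ⟨((w : F), ca w * y⁻¹), ⟨?_, ?_⟩, rfl⟩
      · simpa [Prod.ext_iff] using H1.mul_mem (hca w) (H1.inv_mem hy1)
      · have hcbz : (((w : F)), cb w * z) ∈ H2 := by
          simpa [Prod.ext_iff] using H2.mul_mem (hcb w) hz2
        have : ca w * y⁻¹ = cb w * z := by
          have h' : y * z * cb w = ca w := by
            rw [hyz]; simp [mul_assoc]
          rw [mul_inv_eq_iff_eq_mul, ← h']
          simp [mul_comm, mul_left_comm, mul_assoc]
        rw [this]
        exact hcbz
    · rintro ⟨x, hx, hxw⟩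
      have hx' : (((w : F)), x.2) ∈ H1 ⊓ H2 := by simpa [← hxw] using hx
      have : (QuotientGroup.mk (ca w * (cb w)⁻¹) : A ⧸ L)
          = QuotientGroup.mk (x.2 * x.2⁻¹) :=
        key (w : F) (ca w) x.2 (cb w) x.2 (hca w) hx'.1 (hcb w) hx'.2
      show (QuotientGroup.mk (ca w * (cb w)⁻¹) : A ⧸ L) = 1
      rw [this]
      simp
  refine ⟨Φ, hspec, hker, ?_⟩
  have heq : ((H1 ⊓ H2).map (MonoidHom.fst F A)).subgroupOf K = Φ.ker := by
    ext w
    simpa [Subgroup.mem_subgroupOf] using (hker w).symm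
  rw [heq]
  exact Φ.normal_ker
end

section
/- In G = F₂ × ℤ, let H1 = ⟨(x,t), (y,1)⟩ and H2 = ⟨(x,1), (y,1)⟩. Then H1 ∩ H2 = N × {1}, where N is the normal closure of y in F₂ (equivalently, N = {w ∈ F₂ : the exponent sum of x in w is 0}); moreover H1 ∩ H2 is generated by {(x^i y x^{-i}, 1) : i ∈ ℤ} and is not finitely generated. -/
namespace Moldavanski

abbrev F₂ := FreeGroup (Fin 2)

def x : F₂ := FreeGroup.of 0
def y : F₂ := FreeGroup.of 1
def t : Multiplicative ℤ := Multiplicative.ofAdd 1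

/-!
`H₁` is the graph of the exponent sum `φ : F₂ → ℤ` of `x` and `H₂ = F₂ × 1`, so
`H₁ ∩ H₂ = ker φ × 1`. The conjugates `xⁱ y x⁻ⁱ` generate a subgroup that is normal (conjugation
by `x` shifts `i`), contains `y` and lies in `ker φ`; conversely `ker φ` lies in every normal
subgroup `N ∋ y`, since `n ↦ xⁿ N` is a section of `φ` through `F₂ ⧸ N`. Hence `ker φ` is both the
normal closure of `y` and the subgroup generated by the conjugates. In the action of `F₂` on `ℤ`
by `x ↦ (· + 2)`, `y ↦ (0 1)`, the conjugate `xⁱ y x⁻ⁱ` is the transposition `(2i 2i+1)`, so no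
conjugate lies in the subgroup generated by the others, while a finitely generated subgroup would
be generated by finitely many of them.
-/
open Subgroup

section Product

variable {G M : Type*} [Group G] [Group M]

theorem map_inl_eq_prod_bot (H : Subgroup G) : H.map (MonoidHom.inl G M) = H.prod ⊥ := by
  ext ⟨g, m⟩
  simp [mem_prod, eq_comm]

theorem range_id_prod_inf_range_inl (φ : G →* M) :
    ((MonoidHom.id G).prod φ).range ⊓ (MonoidHom.inl G M).range = φ.ker.prod ⊥ := by
  ext ⟨g, m⟩
  simp only [mem_inf, MonoidHom.mem_range, MonoidHom.prod_apply, MonoidHom.id_apply,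
    Prod.mk.injEq, exists_eq_left, MonoidHom.inl_apply, mem_prod, MonoidHom.mem_ker, mem_bot]
  grind

end Product

section FiniteGeneration

variable {G ι : Type*} [Group G]

theorem exists_finset_mem_closure_image {f : ι → G} {g : G} (hg : g ∈ closure (Set.range f)) :
    ∃ s : Finset ι, g ∈ closure (f '' s) := by
  classical
  induction hg using closure_induction with
  | mem _ hg =>
    obtain ⟨i, rfl⟩ := hg
    exact ⟨{i}, subset_closure (by simp)⟩
  | one => exact ⟨∅, one_mem _⟩
  | mul _ _ _ _ ha hb =>
    obtain ⟨s, hs⟩ := ha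
    obtain ⟨r, hr⟩ := hb
    refine ⟨s ∪ r, mul_mem ?_ ?_⟩
    · exact closure_mono (by gcongr; simp) hs
    · exact closure_mono (by gcongr; simp) hr
  | inv _ _ ha =>
    obtain ⟨s, hs⟩ := ha
    exact ⟨s, inv_mem hs⟩

theorem not_fg_closure_range [Infinite ι] {f : ι → G}
    (hf : ∀ i, f i ∉ closure (f '' {i}ᶜ)) : ¬ (closure (Set.range f)).FG := by
  classical
  intro hfg
  obtain ⟨T, hT, hTfin⟩ := (fg_iff _).mp hfg
  have hmem : ∀ g ∈ T, ∃ s : Finset ι, g ∈ closure (f '' s) := fun g hg =>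
    exists_finset_mem_closure_image (hT ▸ subset_closure hg)
  choose! s hs using hmem
  obtain ⟨i, hi⟩ := Infinite.exists_notMem_finset (hTfin.toFinset.biUnion s)
  have hle : closure (Set.range f) ≤ closure (f '' {i}ᶜ) := by
    rw [← hT, closure_le]
    intro g hg
    refine closure_mono (Set.image_mono ?_) (hs g hg)
    rintro j hj (rfl : j = i)
    exact hi (Finset.mem_biUnion.mpr ⟨g, hTfin.mem_toFinset.mpr hg, hj⟩)
  exact hf i (hle (subset_closure ⟨i, rfl⟩))

theorem notMem_closure_image_of_map {H : Type*} [Group H] (ψ : G →* H) {f : ι → G}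
    {s : Set ι} {g : G} (hg : ψ g ∉ closure ((ψ ∘ f) '' s)) : g ∉ closure (f '' s) := fun hmem =>
  hg (by rw [Set.image_comp, ← MonoidHom.map_closure]; exact mem_map_of_mem ψ hmem)

end FiniteGeneration

def xExpSum : F₂ →* Multiplicative ℤ :=
  FreeGroup.lift fun i : Fin 2 => if i = 0 then Multiplicative.ofAdd (1 : ℤ) else 1

@[simp] theorem xExpSum_x : xExpSum x = Multiplicative.ofAdd 1 := by simp [xExpSum, x]

@[simp] theorem xExpSum_y : xExpSum y = 1 := by simp [xExpSum, y]

theorem closure_x_y : closure {x, y} = (⊤ : Subgroup F₂) := by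
  rw [← FreeGroup.closure_range_of]
  congr
  ext w
  simp [Fin.exists_fin_two, x, y, eq_comm]

theorem closure_pair_eq_range {G : Type*} [Group G] (f : F₂ →* G) :
    closure {f x, f y} = f.range := by
  rw [MonoidHom.range_eq_map, ← closure_x_y, MonoidHom.map_closure, Set.image_pair]

theorem ker_xExpSum_le {N : Subgroup F₂} [N.Normal] (hy : y ∈ N) : xExpSum.ker ≤ N := by
  have hsection : (zpowersHom _ (QuotientGroup.mk' N x)).comp xExpSum = QuotientGroup.mk' N := by
    refine FreeGroup.ext_hom _ _ fun i => ?_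
    fin_cases i
    · change zpowersHom _ _ (xExpSum x) = QuotientGroup.mk' N x
      simp
    · change zpowersHom _ _ (xExpSum y) = QuotientGroup.mk' N y
      rw [xExpSum_y, map_one, QuotientGroup.mk'_apply, eq_comm, QuotientGroup.eq_one_iff]
      exact hy
  intro w hw
  rw [← QuotientGroup.eq_one_iff, ← QuotientGroup.mk'_apply, ← hsection, MonoidHom.comp_apply,
    MonoidHom.mem_ker.mp hw, map_one]

theorem normalClosure_y_eq_ker : normalClosure {y} = xExpSum.ker :=
  le_antisymm (normalClosure_le_normal (by simp))
    (ker_xExpSum_le (subset_normalClosure rfl))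

def yConj (i : ℤ) : F₂ := x ^ i * y * x ^ (-i)

theorem closure_range_yConj_normal : (closure (Set.range yConj)).Normal := by
  have hx : zpowers x ≤ normalizer (closure (Set.range yConj)) := by
    rw [le_normalizer_closure_iff]
    rintro _ ⟨n, rfl⟩ _ ⟨i, rfl⟩
    exact subset_closure ⟨n + i, by simp only [yConj]; group⟩
  have hy : y ∈ closure (Set.range yConj) := subset_closure ⟨0, by simp [yConj]⟩
  rw [← normalizer_eq_top_iff, eq_top_iff, ← closure_x_y, closure_le, Set.pair_subset_iff]
  exact ⟨hx (mem_zpowers x), le_normalizer hy⟩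

theorem closure_range_yConj_eq_ker : closure (Set.range yConj) = xExpSum.ker := by
  have := closure_range_yConj_normal
  refine le_antisymm ?_ (ker_xExpSum_le (subset_closure ⟨0, by simp [yConj]⟩))
  rw [closure_le]
  rintro _ ⟨i, rfl⟩
  simp [yConj]

def permRep : F₂ →* Equiv.Perm ℤ :=
  FreeGroup.lift fun i : Fin 2 => if i = 0 then Equiv.addRight 2 else Equiv.swap 0 1

theorem permRep_yConj (i : ℤ) : permRep (yConj i) = Equiv.swap (2 * i) (2 * i + 1) := by
  have hx : permRep x = Equiv.addRight 2 := by simp [permRep, x]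
  have hy : permRep y = Equiv.swap 0 1 := by simp [permRep, y]
  rw [yConj, map_mul, map_mul, map_zpow, map_zpow, zpow_neg, hx, hy, ← Equiv.swap_apply_apply]
  simp [mul_comm, add_comm]

theorem yConj_notMem_closure (i : ℤ) : yConj i ∉ closure (yConj '' {i}ᶜ) := by
  have hle : closure (yConj '' {i}ᶜ) ≤
      (MulAction.stabilizer (Equiv.Perm ℤ) (2 * i)).comap permRep := by
    rw [closure_le]
    rintro _ ⟨j, hj, rfl⟩
    have hji : j ≠ i := hj
    simp only [SetLike.mem_coe, mem_comap, MulAction.mem_stabilizer_iff, permRep_yConj,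
      Equiv.Perm.smul_def]
    exact Equiv.swap_apply_of_ne_of_ne (by omega) (by omega)
  intro hmem
  simpa [permRep_yConj] using hle hmem

theorem closure_inf_closure_eq_ker_prod_bot :
    closure {(x, t), (y, 1)} ⊓ closure {(x, 1), (y, 1)} = xExpSum.ker.prod ⊥ := by
  have hH₁ : closure {(x, t), (y, 1)} = ((MonoidHom.id F₂).prod xExpSum).range := by
    rw [← closure_pair_eq_range]
    simp [t]
  have hH₂ : closure {(x, 1), (y, 1)} = (MonoidHom.inl F₂ (Multiplicative ℤ)).range := by
    rw [← closure_pair_eq_range]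
    rfl
  rw [hH₁, hH₂, range_id_prod_inf_range_inl]

theorem ker_prod_bot_eq_closure :
    xExpSum.ker.prod ⊥ = closure (Set.range fun i => (yConj i, (1 : Multiplicative ℤ))) := by
  rw [← closure_range_yConj_eq_ker, ← map_inl_eq_prod_bot, MonoidHom.map_closure,
    ← Set.range_comp]
  rfl

/-- **Moldavanski's example.** In `F₂ × ℤ`, with `H1 = ⟨(x,t),(y,1)⟩` and
`H2 = ⟨(x,1),(y,1)⟩`, the intersection `H1 ∩ H2` equals `N × {1}` where `N` is the
normal closure of `y` in `F₂` (equivalently, the words with zero exponent sum in `x`);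
it is generated by `{(xⁱ y x⁻ⁱ, 1) : i ∈ ℤ}` and is not finitely generated. -/
theorem moldavanski :
    (Subgroup.closure {(x, t), (y, 1)} ⊓ Subgroup.closure {(x, 1), (y, 1)} :
        Subgroup (F₂ × Multiplicative ℤ)) =
      (Subgroup.normalClosure {y}).prod (⊥ : Subgroup (Multiplicative ℤ)) ∧
    Subgroup.normalClosure {y} =
      (FreeGroup.lift fun i : Fin 2 =>
        if i = 0 then Multiplicative.ofAdd (1 : ℤ) else 1).ker ∧
    (Subgroup.closure {(x, t), (y, 1)} ⊓ Subgroup.closure {(x, 1), (y, 1)} :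
        Subgroup (F₂ × Multiplicative ℤ)) =
      Subgroup.closure {g : F₂ × Multiplicative ℤ |
        ∃ i : ℤ, g = (x ^ i * y * x ^ (-i), 1)} ∧
    ¬ (Subgroup.closure {(x, t), (y, 1)} ⊓ Subgroup.closure {(x, 1), (y, 1)} :
        Subgroup (F₂ × Multiplicative ℤ)).FG := by
  rw [closure_inf_closure_eq_ker_prod_bot]
  refine ⟨by rw [normalClosure_y_eq_ker], normalClosure_y_eq_ker, ?_, ?_⟩
  · rw [ker_prod_bot_eq_closure]
    congr
    ext g
    simp [yConj, eq_comm]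
  · rw [ker_prod_bot_eq_closure]
    exact not_fg_closure_range fun i =>
      notMem_closure_image_of_map (MonoidHom.fst F₂ (Multiplicative ℤ))
        (f := fun j => (yConj j, 1)) (yConj_notMem_closure i)

end Moldavanski
end

section
/- The group F₂ × ℤ is not Howson: there exist finitely generated subgroups H1, H2 of F₂ × ℤ whose intersection H1 ∩ H2 is not finitely generated. -/
/-!
Let `φ : F₂ → ℤ` send `a ↦ 1`, `b ↦ 0`. Its graph and `F₂ × 1` are finitely generated (each is a
copy of `F₂`), and they meet in `ker φ × 1`. The map `F₂ → ℤ ≀ ℤ`, `a ↦ t`, `b ↦` the generator of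
the base at the identity, is onto, and `φ` factors through it. Hence `ker φ` maps onto the kernel of
`ℤ ≀ ℤ → ℤ`, the base `⨁_ℤ ℤ`, which is not finitely generated; so neither is `ker φ`.
-/

open Function Multiplicative SemidirectProduct

namespace Finsupp

lemma not_addGroupFG_of_infinite {ι M : Type*} [AddCommGroup M] [Nontrivial M] [Infinite ι] :
    ¬ AddGroup.FG (ι →₀ M) := by
  rw [← Module.Finite.iff_addGroup_fg, Module.finite_finsupp_iff]
  simp [not_finite_iff_infinite, not_subsingleton_iff_nontrivial, *]

variable {G M : Type*} [Group G] [AddCommMonoid M]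

noncomputable def translate : G →* MulAut (Multiplicative (G →₀ M)) where
  toFun g := AddEquiv.toMultiplicative (Finsupp.domCongr (Equiv.mulLeft g))
  map_one' := by ext; simp [Equiv.Perm.one_def]
  map_mul' g h := by ext; simp [Equiv.Perm.mul_def]

@[simp]
lemma translate_single (g h : G) (m : M) :
    translate g (ofAdd (single h m)) = ofAdd (single (g * h) m) := by
  simp [translate]

end Finsupp

abbrev RestrictedWreathProduct (M G : Type*) [AddCommGroup M] [Group G] :=
  Multiplicative (G →₀ M) ⋊[Finsupp.translate] G

namespace RestrictedWreathProduct

variable {M G : Type*} [AddCommGroup M] [Group G]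

lemma inr_mul_inl_single_mul_inr_inv (g h : G) (m : M) :
    (inr g * inl (ofAdd (Finsupp.single h m)) * inr g⁻¹ : RestrictedWreathProduct M G) =
      inl (ofAdd (Finsupp.single (g * h) m)) := by
  rw [← inl_aut, Finsupp.translate_single]

lemma eq_top_of_inr_mem_of_inl_single_one_mem {H : Subgroup (RestrictedWreathProduct M G)}
    (hinr : ∀ g, inr g ∈ H) (hinl : ∀ m, inl (ofAdd (Finsupp.single 1 m)) ∈ H) : H = ⊤ := by
  have hsingle (g : G) (m : M) : inl (ofAdd (Finsupp.single g m)) ∈ H := by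
    have := mul_mem (mul_mem (hinr g) (hinl m)) (hinr g⁻¹)
    rwa [inr_mul_inl_single_mul_inr_inv, mul_one] at this
  have hbase (f : G →₀ M) : inl (ofAdd f) ∈ H := by
    induction f using Finsupp.induction with
    | zero => exact H.one_mem
    | single_add g m f _ _ ih => rw [ofAdd_add, map_mul]; exact mul_mem (hsingle g m) ih
  refine eq_top_iff.mpr fun x _ => ?_
  rw [← inl_left_mul_inr_right x]
  exact mul_mem (hbase _) (hinr _)

end RestrictedWreathProduct

namespace SemidirectProduct

variable {N G F : Type*} [Group N] [Group G] [Group F] {φ : G →* MulAut N}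

lemma fg_of_fg_ker_rightHom_comp {ρ : F →* N ⋊[φ] G} (hρ : Surjective ρ)
    (h : (rightHom.comp ρ).ker.FG) : Group.FG N := by
  rw [← MonoidHom.comap_ker, ← Group.fg_iff_subgroup_fg] at h
  have : Group.FG rightHom.ker :=
    Group.fg_of_surjective (MonoidHom.subgroupComap_surjective_of_surjective ρ _ hρ)
  let e : N ≃* (rightHom : N ⋊[φ] G →* G).ker :=
    (MonoidHom.ofInjective inl_injective).trans (MulEquiv.subgroupCongr range_inl_eq_ker_rightHom)
  exact Group.fg_of_surjective (f := e.symm.toMonoidHom) e.symm.surjective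

end SemidirectProduct

lemma MonoidHom.graph_inf_range_inl {G H : Type*} [Group G] [Group H] (f : G →* H) :
    f.graph ⊓ (MonoidHom.inl G H).range = f.ker.map (MonoidHom.inl G H) := by
  ext ⟨g, h⟩
  simp +contextual [MonoidHom.mem_graph, eq_comm]

lemma Subgroup.fg_of_fg_map_of_injective {G H : Type*} [Group G] [Group H] {f : G →* H}
    (hf : Injective f) {K : Subgroup G} (h : (K.map f).FG) : K.FG := by
  rw [← Group.fg_iff_subgroup_fg] at h ⊢
  let e := K.equivMapOfInjective f hf
  exact Group.fg_of_surjective (f := e.symm.toMonoidHom) e.symm.surjective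

noncomputable def FreeGroup.toIntWreathInt :
    FreeGroup (Fin 2) →* RestrictedWreathProduct ℤ (Multiplicative ℤ) :=
  FreeGroup.lift ![inr (ofAdd 1), inl (ofAdd (Finsupp.single 1 1))]

lemma FreeGroup.toIntWreathInt_surjective : Surjective toIntWreathInt := by
  rw [← MonoidHom.range_eq_top]
  apply RestrictedWreathProduct.eq_top_of_inr_mem_of_inl_single_one_mem
  · intro g
    have : inr g = toIntWreathInt (of 0) ^ g.toAdd := by
      simp [toIntWreathInt, ← map_zpow, ← ofAdd_zsmul]
    rw [this]
    exact zpow_mem (MonoidHom.mem_range.mpr ⟨_, rfl⟩) _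
  · intro m
    have : inl (ofAdd (Finsupp.single 1 m)) = toIntWreathInt (of 1) ^ m := by
      simp [toIntWreathInt, ← map_zpow, ← ofAdd_zsmul]
    rw [this]
    exact zpow_mem (MonoidHom.mem_range.mpr ⟨_, rfl⟩) _

/-- `F₂ × ℤ` is not Howson: there are finitely generated subgroups
`H1, H2 ≤ F₂ × ℤ` whose intersection is not finitely generated. -/
theorem F2_times_Z_not_howson :
    ∃ H1 H2 : Subgroup (FreeGroup (Fin 2) × Multiplicative ℤ),
      H1.FG ∧ H2.FG ∧ ¬ (H1 ⊓ H2).FG := by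
  set φ := rightHom.comp FreeGroup.toIntWreathInt
  refine ⟨φ.graph, (MonoidHom.inl _ _).range, ?_, ?_, ?_⟩
  · rw [MonoidHom.graph_eq_range_prod, ← Group.fg_iff_subgroup_fg]
    infer_instance
  · rw [← Group.fg_iff_subgroup_fg]
    infer_instance
  · rw [MonoidHom.graph_inf_range_inl]
    intro hfg
    have hker : φ.ker.FG :=
      Subgroup.fg_of_fg_map_of_injective (fun _ _ h => congrArg Prod.fst h) hfg
    exact Finsupp.not_addGroupFG_of_infinite (AddGroup.fg_iff_mul_fg.mpr
      (fg_of_fg_ker_rightHom_comp FreeGroup.toIntWreathInt_surjective hker))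
end

section
/- Every finitely generated subgroup H of G = F_n × A, where F_n is a finitely generated free group, is a factor of a finite-index subgroup of G: there exists a subgroup K of G with H ≤ K and [G : K] finite, a subgroup B of Kπ such that Kπ is the internal free product of Hπ and B (i.e. the natural homomorphism Hπ ∗ B → Kπ induced by the inclusions is an isomorphism), and a subgroup C of L_K such that L_K is the internal direct product of L_H and C. -/
/-!
Write `Hπ = ⟨S⟩` with `S` finite, let `Y = Fₙ ⧸ Hπ`, and let `V ⊆ Y` be the finite set of cosets
`u Hπ` with `u` a suffix of the reduced word of a generator. The letters of `Fₙ` act on `V` as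
partial injections; completing them to permutations of `V` gives a finite `Fₙ`-set whose
stabiliser `U` of the base coset has finite index. Pick a spanning tree of the Schreier graph
of `V` that only uses darts of the partial action. By Schreier, `U` is free on the loops through
the chords of that tree, and the loops through the chords of the partial action generate exactly
`Hπ` (they fix the base coset of `Y`, and every generator reads off a path of such darts). So `Hπ`
is a free factor of `U` (Marshall Hall).

On the abelian side, a subgroup `C` maximal with `L_H ∩ C = 1` makes `A ⧸ L_H C` torsion, hence
finite. The homomorphism `Hπ → A ⧸ L_H C`, `w ↦ a` for `(w, a) ∈ H`, extends to `U` by killing the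
complementary free factor, and `K` is the set of `(w, a)` with `w ∈ U` mapping to `a`.
-/

open Function
open scoped Monoid.Coprod

section FreeFactor

variable {G : Type*} [Group G]

def Subgroup.IsFreeFactor (H U : Subgroup G) : Prop :=
  ∃ (B : Subgroup G) (hBU : B ≤ U) (hHU : H ≤ U),
    Bijective (Monoid.Coprod.lift (Subgroup.inclusion hHU) (Subgroup.inclusion hBU))

theorem Subgroup.IsFreeFactor.le {H U : Subgroup G} (h : H.IsFreeFactor U) : H ≤ U :=
  h.choose_spec.2.1

theorem Subgroup.IsFreeFactor.exists_extend {H U : Subgroup G} (h : H.IsFreeFactor U)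
    {Q : Type*} [Group Q] (f : H →* Q) :
    ∃ g : U →* Q, ∀ x : H, g (Subgroup.inclusion h.le x) = f x := by
  obtain ⟨B, hBU, hHU, hbij⟩ := h
  let e := MulEquiv.ofBijective _ hbij
  refine ⟨(Monoid.Coprod.lift f 1).comp e.symm.toMonoidHom, fun x => ?_⟩
  have hx : Subgroup.inclusion hHU x = e (Monoid.Coprod.inl x) := rfl
  simp [hx]

theorem Monoid.Coprod.isFreeFactor_range_comp_inl {M N : Type*} [Group M] [Group N]
    {φ : M ∗ N →* G} (hφ : Injective φ) : (φ.comp inl).range.IsFreeFactor φ.range := by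
  have hl : (φ.comp inl).range ≤ φ.range := MonoidHom.range_comp φ inl ▸ Subgroup.map_le_range _ _
  have hr : (φ.comp inr).range ≤ φ.range := MonoidHom.range_comp φ inr ▸ Subgroup.map_le_range _ _
  refine ⟨_, hr, hl, ?_⟩
  let e₁ := MonoidHom.ofInjective (f := φ.comp inl) (hφ.comp inl_injective)
  let e₂ := MonoidHom.ofInjective (f := φ.comp inr) (hφ.comp inr_injective)
  have hcomp : (lift (Subgroup.inclusion hl) (Subgroup.inclusion hr)).comp
      (MulEquiv.coprodCongr e₁ e₂).toMonoidHom = φ.rangeRestrict :=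
    hom_ext (MonoidHom.ext fun _ => rfl) (MonoidHom.ext fun _ => rfl)
  have hbij : Bijective φ.rangeRestrict :=
    ⟨MonoidHom.rangeRestrict_injective_iff.2 hφ, φ.rangeRestrict_surjective⟩
  rw [← hcomp, MonoidHom.coe_comp] at hbij
  exact (Bijective.of_comp_iff _ (MulEquiv.coprodCongr e₁ e₂).bijective).1 hbij

theorem FreeGroup.bijective_coprodLift_map_subtype {E : Type*} (P : E → Prop) :
    Bijective (Monoid.Coprod.lift (FreeGroup.map (Subtype.val : {e // P e} → E))
      (FreeGroup.map (Subtype.val : {e // ¬ P e} → E))) := by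
  classical
  let ρ : FreeGroup E →* FreeGroup {e // P e} ∗ FreeGroup {e // ¬ P e} :=
    FreeGroup.lift fun e => if h : P e then .inl (.of ⟨e, h⟩) else .inr (.of ⟨e, h⟩)
  refine bijective_iff_has_inverse.2 ⟨ρ, fun x => ?_, fun x => ?_⟩
  · suffices ρ.comp (Monoid.Coprod.lift _ _) = .id _ from DFunLike.congr_fun this x
    refine Monoid.Coprod.hom_ext (FreeGroup.ext_hom _ _ fun e => ?_)
      (FreeGroup.ext_hom _ _ fun e => ?_)
    · simp [ρ, e.2]
    · simp [ρ, e.2]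
  · suffices (Monoid.Coprod.lift _ _).comp ρ = .id _ from DFunLike.congr_fun this x
    refine FreeGroup.ext_hom _ _ fun e => ?_
    by_cases h : P e <;> simp [ρ, h]

theorem FreeGroup.isFreeFactor_map_closure {E : Type*} {f : FreeGroup E →* G}
    (hf : Injective f) (P : E → Prop) :
    ((Subgroup.closure (FreeGroup.of '' {e | P e})).map f).IsFreeFactor f.range := by
  have hJ := bijective_coprodLift_map_subtype P
  have h := Monoid.Coprod.isFreeFactor_range_comp_inl (φ := f.comp (Monoid.Coprod.lift _ _))
    (hf.comp hJ.1)
  rwa [MonoidHom.comp_assoc, Monoid.Coprod.lift_comp_inl, MonoidHom.range_comp, range_map,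
    Subtype.range_val_subtype, MonoidHom.range_comp, MonoidHom.range_eq_top.2 hJ.2,
    ← MonoidHom.range_eq_map] at h

end FreeFactor

namespace FreeGroup

variable {α X : Type*}

theorem mk_cons_true (s : α) (l : List (α × Bool)) : mk ((s, true) :: l) = of s * mk l := rfl

theorem mk_cons_false (s : α) (l : List (α × Bool)) : mk ((s, false) :: l) = (of s)⁻¹ * mk l :=
  rfl

variable [MulAction (FreeGroup α) X]

/-- Read from right to left, `l` walks from `x₀` along darts `(v, s)` (the edges
`v ⟶ of s • v` of the Schreier graph) that lie in `D`, each traversed in either direction. -/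
def IsPathIn (D : X → α → Prop) (x₀ : X) : List (α × Bool) → Prop
  | [] => True
  | (s, true) :: l => D (mk l • x₀) s ∧ IsPathIn D x₀ l
  | (s, false) :: l => D ((of s)⁻¹ • mk l • x₀) s ∧ IsPathIn D x₀ l

theorem IsPathIn.tail {D : X → α → Prop} {x₀ : X} {a : α × Bool} {l : List (α × Bool)}
    (h : IsPathIn D x₀ (a :: l)) : IsPathIn D x₀ l := by
  obtain ⟨s, _ | _⟩ := a <;> exact h.2

def pathsTo (D : X → α → Prop) (x₀ x : X) : Set (List (α × Bool)) :=
  {l | IsPathIn D x₀ l ∧ mk l • x₀ = x}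

/-- A spanning tree of the subgraph `D` of the Schreier graph, rooted at `x₀`, recorded by the
labels `word x` of its paths from the root. Its edges are the darts of `D` along which `word` grows
by one letter; `induction_on` says that every vertex is reached from the root along them. -/
structure SpanningTree (D : X → α → Prop) (x₀ : X) where
  ofWord ::
  word : X → FreeGroup α
  word_root : word x₀ = 1
  induction_on {Q : X → Prop} (root : Q x₀)
    (edge : ∀ v s, D v s → word (of s • v) = of s * word v → (Q v ↔ Q (of s • v))) (x : X) : Q x

namespace SpanningTree

variable {D : X → α → Prop} {x₀ : X}

section ShortestPaths

variable (hconn : ∀ x, (pathsTo D x₀ x).Nonempty)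

noncomputable def shortestPath (x : X) : List (α × Bool) :=
  argminOn List.length (pathsTo D x₀ x) (hconn x)

theorem shortestPath_mem (x : X) : shortestPath hconn x ∈ pathsTo D x₀ x :=
  argminOn_mem _ _ _

theorem length_shortestPath_le {l : List (α × Bool)} (hl : IsPathIn D x₀ l) :
    (shortestPath hconn (mk l • x₀)).length ≤ l.length :=
  argminOn_le _ (pathsTo D x₀ _) (show l ∈ pathsTo D x₀ (mk l • x₀) from ⟨hl, rfl⟩)

theorem length_shortestPath_lt {a : α × Bool} {l : List (α × Bool)} {x : X}
    (h : shortestPath hconn x = a :: l) :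
    (shortestPath hconn (mk l • x₀)).length < (shortestPath hconn x).length := by
  have hl := (shortestPath_mem hconn x).1
  rw [h] at hl ⊢
  exact (length_shortestPath_le hconn hl.tail).trans_lt (Nat.lt_succ_self _)

/-- The parent of `x` is the vertex before the last step of the chosen shortest path to `x`. -/
noncomputable def treeWord (x : X) : FreeGroup α :=
  match _hx : shortestPath hconn x with
  | [] => 1
  | a :: l => mk [a] * treeWord (mk l • x₀)
termination_by (shortestPath hconn x).length
decreasing_by exact length_shortestPath_lt hconn _hx

theorem treeWord_cons {a : α × Bool} {l : List (α × Bool)} {x : X}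
    (h : shortestPath hconn x = a :: l) :
    treeWord hconn x = mk [a] * treeWord hconn (mk l • x₀) := by
  rw [treeWord]
  split <;> simp_all

theorem shortestPath_root : shortestPath hconn x₀ = [] := by
  have h := length_shortestPath_le hconn (x₀ := x₀) (l := []) trivial
  rw [← one_eq_mk, one_smul] at h
  exact List.length_eq_zero_iff.1 (Nat.le_zero.1 h)

theorem treeWord_root : treeWord hconn x₀ = 1 := by
  rw [treeWord]
  split <;> simp_all [shortestPath_root]

theorem treeWord_induction {Q : X → Prop} (root : Q x₀)
    (edge : ∀ v s, D v s → treeWord hconn (of s • v) = of s * treeWord hconn v →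
      (Q v ↔ Q (of s • v))) (x : X) : Q x := by
  induction hd : List.length (shortestPath hconn x) using Nat.strong_induction_on
    generalizing x with
  | _ n ih =>
  obtain ⟨hpath, hx⟩ := shortestPath_mem hconn x
  cases hp : shortestPath hconn x with
  | nil => simp_all [← one_eq_mk]
  | cons a l =>
    have hy := ih _ (hd ▸ length_shortestPath_lt hconn hp) (mk l • x₀) rfl
    have hw := treeWord_cons hconn hp
    rw [hp] at hpath hx
    obtain ⟨s, _ | _⟩ := a
    · rw [mk_cons_false, mul_smul] at hx
      subst hx
      have hedge : treeWord hconn (of s • (of s)⁻¹ • mk l • x₀) =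
          of s * treeWord hconn ((of s)⁻¹ • mk l • x₀) := by
        rw [hw, smul_inv_smul]
        exact (mul_inv_cancel_left (of s) _).symm
      exact (edge _ s hpath.1 hedge).2 (by rwa [smul_inv_smul])
    · rw [mk_cons_true, mul_smul] at hx
      subst hx
      exact (edge _ s hpath.1 hw).1 hy

noncomputable def ofShortestPaths : SpanningTree D x₀ :=
  ⟨treeWord hconn, treeWord_root hconn, treeWord_induction hconn⟩

end ShortestPaths

end SpanningTree

variable {N : Type*} [Group N]

section LabelCocycle

variable (c : X → α → N)

def labelPerm (s : α) : Equiv.Perm (X × N) where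
  toFun q := (of s • q.1, c q.1 s * q.2)
  invFun q := ((of s)⁻¹ • q.1, (c ((of s)⁻¹ • q.1) s)⁻¹ * q.2)
  left_inv q := by simp
  right_inv q := by simp

/-- The product of the labels `c` of the darts along the path that `w` traces from `x`, a dart
crossed backwards contributing the inverse of its label. -/
def labelCocycle (w : FreeGroup α) (x : X) : N := (lift (labelPerm c) w (x, 1)).2

theorem lift_labelPerm_apply (w : FreeGroup α) (x : X) (m : N) :
    lift (labelPerm c) w (x, m) = (w • x, labelCocycle c w x * m) := by
  induction w using FreeGroup.induction_on generalizing x m with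
  | C1 => simp [labelCocycle]
  | of s => simp [labelCocycle, labelPerm]
  | inv_of s _ => simp [labelCocycle, labelPerm, Equiv.Perm.inv_def]
  | mul a b iha ihb =>
    have hab (m : N) : lift (labelPerm c) (a * b) (x, m) =
        lift (labelPerm c) a (lift (labelPerm c) b (x, m)) := by rw [_root_.map_mul]; rfl
    have hψ : labelCocycle c (a * b) x = labelCocycle c a (b • x) * labelCocycle c b x := by
      rw [labelCocycle, hab, ihb, iha, mul_one]
    rw [hab, ihb, iha, hψ, mul_smul, mul_assoc]

theorem labelCocycle_mul (a b : FreeGroup α) (x : X) :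
    labelCocycle c (a * b) x = labelCocycle c a (b • x) * labelCocycle c b x := by
  have := lift_labelPerm_apply c (a * b) x 1
  rw [_root_.map_mul, Equiv.Perm.mul_apply, lift_labelPerm_apply, lift_labelPerm_apply] at this
  simpa using (congrArg Prod.snd this).symm

@[simp]
theorem labelCocycle_one (x : X) : labelCocycle c 1 x = 1 := by simp [labelCocycle]

@[simp]
theorem labelCocycle_of (s : α) (x : X) : labelCocycle c (of s) x = c x s := by
  simp [labelCocycle, labelPerm]

theorem labelCocycle_inv (w : FreeGroup α) (x : X) :
    labelCocycle c w⁻¹ x = (labelCocycle c w (w⁻¹ • x))⁻¹ := by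
  have h := labelCocycle_mul c w w⁻¹ x
  rw [mul_inv_cancel, labelCocycle_one] at h
  exact eq_inv_of_mul_eq_one_right h.symm

end LabelCocycle

theorem labelCocycle_mem_of_isPathIn {c : X → α → N} {D : X → α → Prop} {x₀ : X}
    {K : Subgroup N} (hc : ∀ v s, D v s → c v s ∈ K) :
    ∀ {l : List (α × Bool)}, IsPathIn D x₀ l → labelCocycle c (mk l) x₀ ∈ K
  | [], _ => by simp [← one_eq_mk, K.one_mem]
  | (s, true) :: l, ⟨hD, hl⟩ => by
    rw [mk_cons_true, labelCocycle_mul, labelCocycle_of]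
    exact K.mul_mem (hc _ _ hD) (labelCocycle_mem_of_isPathIn hc hl)
  | (s, false) :: l, ⟨hD, hl⟩ => by
    rw [mk_cons_false, labelCocycle_mul, labelCocycle_inv, labelCocycle_of]
    exact K.mul_mem (K.inv_mem (hc _ _ hD)) (labelCocycle_mem_of_isPathIn hc hl)

namespace SpanningTree

variable {D : X → α → Prop} {x₀ : X} (T : SpanningTree D x₀)

theorem eq_word_smul {Y : Type*} [MulAction (FreeGroup α) Y] {p : X → Y}
    (hp : ∀ v s, D v s → p (of s • v) = of s • p v) (x : X) : p x = T.word x • p x₀ :=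
  T.induction_on (Q := fun x => p x = T.word x • p x₀) (by rw [T.word_root, one_smul])
    (fun v s hD hw => by rw [hp v s hD, hw, mul_smul, smul_left_cancel_iff]) x

theorem word_smul (x : X) : T.word x • x₀ = x :=
  (T.eq_word_smul (p := id) (fun _ _ _ => rfl) x).symm

def IsEdge (v : X) (s : α) : Prop := D v s ∧ T.word (of s • v) = of s * T.word v

def Chord : Type _ := {d : X × α // ¬ T.IsEdge d.1 d.2}

open Classical in
noncomputable def chordLabel (v : X) (s : α) : FreeGroup T.Chord :=
  if h : T.IsEdge v s then 1 else of ⟨(v, s), h⟩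

/-- The Schreier generator of the chord `e`. -/
def chordLoop (e : T.Chord) : FreeGroup α :=
  (T.word (of e.1.2 • e.1.1))⁻¹ * of e.1.2 * T.word e.1.1

noncomputable def loopHom : FreeGroup T.Chord →* FreeGroup α := lift T.chordLoop

theorem loopHom_chordLabel (v : X) (s : α) :
    T.loopHom (T.chordLabel v s) = (T.word (of s • v))⁻¹ * of s * T.word v := by
  unfold chordLabel
  split_ifs with h
  · rw [_root_.map_one, h.2]
    group
  · exact lift_apply_of

theorem loopHom_labelCocycle (w : FreeGroup α) (x : X) :
    T.loopHom (labelCocycle T.chordLabel w x) = (T.word (w • x))⁻¹ * w * T.word x := by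
  induction w using FreeGroup.induction_on generalizing x with
  | C1 => simp
  | of s => rw [labelCocycle_of, loopHom_chordLabel]
  | inv_of s _ =>
    rw [labelCocycle_inv, labelCocycle_of, _root_.map_inv, loopHom_chordLabel, smul_inv_smul]
    group
  | mul a b iha ihb =>
    rw [labelCocycle_mul, _root_.map_mul, iha, ihb, mul_smul]
    group

theorem labelCocycle_word (x : X) : labelCocycle T.chordLabel (T.word x) x₀ = 1 := by
  refine T.induction_on (Q := fun x => labelCocycle T.chordLabel (T.word x) x₀ = 1)
    (by rw [T.word_root, labelCocycle_one]) (fun v s hD hw => ?_) x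
  rw [hw, labelCocycle_mul, T.word_smul, labelCocycle_of, chordLabel, dif_pos ⟨hD, hw⟩, one_mul]

theorem range_loopHom : T.loopHom.range = MulAction.stabilizer (FreeGroup α) x₀ := by
  refine le_antisymm (range_lift_le ?_) fun w hw => ⟨labelCocycle T.chordLabel w x₀, ?_⟩
  · rintro _ ⟨e, rfl⟩
    rw [SetLike.mem_coe, MulAction.mem_stabilizer_iff, chordLoop, mul_smul, mul_smul,
      T.word_smul, inv_smul_eq_iff, T.word_smul]
  · rw [loopHom_labelCocycle, MulAction.mem_stabilizer_iff.1 hw, T.word_root]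
    group

theorem loopHom_smul (m : FreeGroup T.Chord) : T.loopHom m • x₀ = x₀ :=
  MulAction.mem_stabilizer_iff.1 (T.range_loopHom ▸ ⟨m, rfl⟩)

theorem labelCocycle_loopHom (m : FreeGroup T.Chord) :
    labelCocycle T.chordLabel (T.loopHom m) x₀ = m := by
  induction m using FreeGroup.induction_on with
  | C1 => simp
  | of e =>
    rw [loopHom, lift_apply_of, chordLoop, labelCocycle_mul, labelCocycle_mul, labelCocycle_inv,
      T.word_smul, inv_smul_eq_iff.2 (T.word_smul _).symm, T.labelCocycle_word,
      T.labelCocycle_word, labelCocycle_of, chordLabel, dif_neg e.2]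
    simp only [inv_one, one_mul, mul_one]
    rfl
  | inv_of e ih =>
    rw [_root_.map_inv, labelCocycle_inv, inv_smul_eq_iff.2 (T.loopHom_smul _).symm, ih]
  | mul a b iha ihb =>
    rw [_root_.map_mul, labelCocycle_mul, T.loopHom_smul, iha, ihb]

theorem loopHom_injective : Function.Injective T.loopHom :=
  Function.LeftInverse.injective (g := fun m => labelCocycle T.chordLabel m x₀)
    T.labelCocycle_loopHom

theorem chordLoop_smul_eq {Y : Type*} [MulAction (FreeGroup α) Y] {p : X → Y}
    (hp : ∀ v s, D v s → p (of s • v) = of s • p v) {e : T.Chord} (he : D e.1.1 e.1.2) :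
    T.chordLoop e • p x₀ = p x₀ := by
  rw [chordLoop, mul_smul, mul_smul, ← T.eq_word_smul hp, ← hp _ _ he,
    T.eq_word_smul hp (of _ • _), inv_smul_smul]

theorem mk_mem_map_closure {l : List (α × Bool)} (hl : IsPathIn D x₀ l) (hx : mk l • x₀ = x₀) :
    mk l ∈ (Subgroup.closure (of '' {e : T.Chord | D e.1.1 e.1.2})).map T.loopHom := by
  refine ⟨labelCocycle T.chordLabel (mk l) x₀, labelCocycle_mem_of_isPathIn (fun v s hD => ?_) hl,
    by rw [loopHom_labelCocycle, hx, T.word_root]; group⟩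
  unfold chordLabel
  split_ifs with h
  · exact Subgroup.one_mem _
  · exact Subgroup.subset_closure ⟨⟨(v, s), h⟩, hD, rfl⟩

end SpanningTree

variable {Y : Type*} [MulAction (FreeGroup α) Y]

theorem exists_perm_extend_smul (V : Set Y) [Finite V] (s : α) :
    ∃ σ : Equiv.Perm V, ∀ (v : V) (h : of s • (v : Y) ∈ V), σ v = ⟨of s • (v : Y), h⟩ := by
  classical
  let e : {v : V // of s • (v : Y) ∈ V} ≃ {w : V // (of s)⁻¹ • (w : Y) ∈ V} :=
    { toFun v := ⟨⟨_, v.2⟩, by simp⟩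
      invFun w := ⟨⟨_, w.2⟩, by simp⟩
      left_inv v := by simp
      right_inv w := by simp }
  exact ⟨e.extendSubtype, fun v h => e.extendSubtype_apply_of_mem v h⟩

theorem isPathIn_of_forall_suffix {V : Set Y} [MulAction (FreeGroup α) V]
    (hV : ∀ (v : V) (s : α), of s • (v : Y) ∈ V → ((of s • v : V) : Y) = of s • (v : Y))
    (x₀ : V) :
    ∀ l : List (α × Bool), (∀ l', l' <:+ l → mk l' • (x₀ : Y) ∈ V) →
      IsPathIn (fun (v : V) s => of s • (v : Y) ∈ V) x₀ l ∧ ((mk l • x₀ : V) : Y) = mk l • (x₀ : Y)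
  | [], _ => ⟨trivial, by simp [← one_eq_mk]⟩
  | (s, true) :: l, hl => by
    obtain ⟨hpath, hy⟩ := isPathIn_of_forall_suffix hV x₀ l fun l' h =>
      hl l' (h.trans (List.suffix_cons _ _))
    have hmem := hl _ List.suffix_rfl
    rw [mk_cons_true, mul_smul, ← hy] at hmem
    refine ⟨⟨hmem, hpath⟩, ?_⟩
    rw [mk_cons_true, mul_smul, hV _ _ hmem, hy, mul_smul]
  | (s, false) :: l, hl => by
    obtain ⟨hpath, hy⟩ := isPathIn_of_forall_suffix hV x₀ l fun l' h =>
      hl l' (h.trans (List.suffix_cons _ _))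
    let z : V := ⟨_, hl _ List.suffix_rfl⟩
    have hz : of s • (z : Y) = mk l • (x₀ : Y) := by
      simp [z, mk_cons_false, mul_smul]
    have hzV : of s • (z : Y) ∈ V := hz ▸ hy ▸ (mk l • x₀ : V).2
    have hsz : of s • z = mk l • x₀ := Subtype.ext (by rw [hV _ _ hzV, hz, hy])
    have hz' : (of s)⁻¹ • mk l • x₀ = z := by rw [← hsz, inv_smul_smul]
    refine ⟨⟨hz' ▸ hzV, hpath⟩, ?_⟩
    rw [mk_cons_false, mul_smul, hz']
    simp [z, mk_cons_false, mul_smul]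

theorem isFreeFactor_stabilizer [DecidableEq α] {V : Set Y} [MulAction (FreeGroup α) V]
    (hV : ∀ (v : V) (s : α), of s • (v : Y) ∈ V → ((of s • v : V) : Y) = of s • (v : Y))
    (x₀ : V) {S : Set (FreeGroup α)}
    (hS : Subgroup.closure S = MulAction.stabilizer (FreeGroup α) (x₀ : Y))
    (hSV : ∀ g ∈ S, ∀ l, l <:+ toWord g → mk l • (x₀ : Y) ∈ V)
    (hVS : ∀ v : V, v = x₀ ∨ ∃ g ∈ S, ∃ l, l <:+ toWord g ∧ mk l • (x₀ : Y) = v) :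
    (MulAction.stabilizer (FreeGroup α) (x₀ : Y)).IsFreeFactor
      (MulAction.stabilizer (FreeGroup α) x₀) := by
  let D : V → α → Prop := fun v s => of s • (v : Y) ∈ V
  have hpath (g) (hg : g ∈ S) (l) (hl : l <:+ toWord g) :
      IsPathIn D x₀ l ∧ ((mk l • x₀ : V) : Y) = mk l • (x₀ : Y) :=
    isPathIn_of_forall_suffix hV x₀ l fun l' h => hSV g hg l' (h.trans hl)
  have hconn (x : V) : (pathsTo D x₀ x).Nonempty := by
    rcases hVS x with rfl | ⟨g, hg, l, hl, hx⟩
    · exact ⟨[], trivial, by simp [← one_eq_mk]⟩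
    · exact ⟨l, (hpath g hg l hl).1, Subtype.ext ((hpath g hg l hl).2.trans hx)⟩
  let T := SpanningTree.ofShortestPaths hconn
  have hH : MulAction.stabilizer (FreeGroup α) (x₀ : Y) =
      (Subgroup.closure (of '' {e : T.Chord | D e.1.1 e.1.2})).map T.loopHom := by
    refine le_antisymm ?_ ?_
    · rw [← hS, Subgroup.closure_le]
      intro g hg
      obtain ⟨hp, hg'⟩ := hpath g hg _ List.suffix_rfl
      have hgH : g • (x₀ : Y) = x₀ := hS.le (Subgroup.subset_closure hg)
      rw [← mk_toWord (x := g)]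
      exact T.mk_mem_map_closure hp (Subtype.ext (by rw [hg', mk_toWord, hgH]))
    · rw [Subgroup.map_le_iff_le_comap, Subgroup.closure_le]
      rintro _ ⟨e, he, rfl⟩
      rw [SetLike.mem_coe, Subgroup.mem_comap, MulAction.mem_stabilizer_iff,
        SpanningTree.loopHom, lift_apply_of]
      exact T.chordLoop_smul_eq (p := Subtype.val) hV he
  rw [hH, ← T.range_loopHom]
  exact isFreeFactor_map_closure T.loopHom_injective _

end FreeGroup

theorem Subgroup.FG.exists_finiteIndex_isFreeFactor {α : Type*} {H : Subgroup (FreeGroup α)}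
    (hH : H.FG) : ∃ U : Subgroup (FreeGroup α), U.FiniteIndex ∧ H.IsFreeFactor U := by
  classical
  obtain ⟨S, rfl⟩ := hH
  let c₀ : FreeGroup α ⧸ closure (S : Set (FreeGroup α)) := (1 : FreeGroup α)
  let V := insert c₀ (⋃ g ∈ S, (fun l => FreeGroup.mk l • c₀) '' {l | l ∈ g.toWord.tails})
  have : Finite V := ((S.finite_toSet.biUnion fun g _ =>
    (g.toWord.tails.finite_toSet.image _)).insert c₀).to_subtype
  choose σ hσ using FreeGroup.exists_perm_extend_smul (α := α) V
  let _ : MulAction (FreeGroup α) V := MulAction.compHom V (FreeGroup.lift σ)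
  let x₀ : V := ⟨c₀, Set.mem_insert _ _⟩
  have hHU := FreeGroup.isFreeFactor_stabilizer (fun v s h => ?_) x₀
    (MulAction.stabilizer_quotient _).symm (fun g hg l hl => ?_) fun v => ?_
  · rw [MulAction.stabilizer_quotient] at hHU
    refine ⟨_, ⟨?_⟩, hHU⟩
    rw [MulAction.index_stabilizer]
    exact ((Set.ncard_pos (Set.toFinite _)).2 ⟨x₀, MulAction.mem_orbit_self x₀⟩).ne'
  · show (FreeGroup.lift σ (FreeGroup.of s) • v).1 = _
    rw [FreeGroup.lift_apply_of, Equiv.Perm.smul_def, hσ _ _ h]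
  · exact Set.mem_insert_of_mem _ (Set.mem_biUnion hg ⟨l, (List.mem_tails _ _).2 hl, rfl⟩)
  · obtain ⟨v, rfl | hv⟩ := v
    · exact Or.inl rfl
    · obtain ⟨g, hg, l, hl, rfl⟩ := Set.mem_iUnion₂.1 hv
      exact Or.inr ⟨g, hg, l, (List.mem_tails _ _).1 hl, rfl⟩

theorem Subgroup.inf_sup_zpowers_eq_bot {A : Type*} [CommGroup A] {L C : Subgroup A}
    (hLC : L ⊓ C = ⊥) {a : A} (ha : ∀ k : ℤ, a ^ k ∈ L ⊔ C → a ^ k = 1) :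
    L ⊓ (C ⊔ Subgroup.zpowers a) = ⊥ := by
  refine eq_bot_iff.2 fun x ⟨hxL, hxC⟩ => ?_
  obtain ⟨c, hc, _, ⟨k, rfl⟩, rfl⟩ := Subgroup.mem_sup.1 hxC
  have hk : a ^ k = 1 := ha k (by
    simpa [mul_inv_cancel_comm] using mul_mem (mem_sup_left hxL) (mem_sup_right (inv_mem hc)))
  simp only [hk, mul_one] at hxL ⊢
  exact hLC ▸ ⟨hxL, hc⟩

theorem Subgroup.exists_maximal_inf_eq_bot {G : Type*} [Group G] (L : Subgroup G) :
    ∃ C : Subgroup G, Maximal (fun C => L ⊓ C = ⊥) C := by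
  obtain ⟨C, -, hC⟩ := zorn_le_nonempty₀ {C : Subgroup G | L ⊓ C = ⊥}
    (fun c hc hchain C hCc => ⟨sSup c, eq_bot_iff.2 fun x ⟨hxL, hxc⟩ => by
      obtain ⟨D, hD, hxD⟩ := (mem_sSup_of_directedOn ⟨C, hCc⟩ hchain.directedOn).1 hxc
      exact (hc hD).le ⟨hxL, hxD⟩, fun _ => le_sSup⟩) ⊥ (inf_bot_eq L)
  exact ⟨C, hC⟩

theorem Subgroup.isMulTorsion_quotient_sup {A : Type*} [CommGroup A] {L C : Subgroup A}
    (hC : Maximal (fun C => L ⊓ C = ⊥) C) : IsMulTorsion (A ⧸ (L ⊔ C)) := by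
  intro q
  obtain ⟨a, rfl⟩ := QuotientGroup.mk_surjective q
  by_contra hfin
  have ha : ∀ k : ℤ, a ^ k ∈ L ⊔ C → a ^ k = 1 := fun k hk => by
    obtain rfl : k = 0 := by
      by_contra hk0
      exact hfin (isOfFinOrder_iff_zpow_eq_one.2
        ⟨k, hk0, by rwa [← QuotientGroup.mk_zpow, QuotientGroup.eq_one_iff]⟩)
    exact zpow_zero a
  have haC : a ∈ C := hC.2 (inf_sup_zpowers_eq_bot hC.1 ha) le_sup_left
    (mem_sup_right (mem_zpowers a))
  exact hfin ((QuotientGroup.eq_one_iff (N := L ⊔ C) a).2 (mem_sup_right haC) ▸ IsOfFinOrder.one)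

theorem Subgroup.exists_inf_eq_bot_finiteIndex_sup {A : Type*} [CommGroup A] [Group.FG A]
    (L : Subgroup A) : ∃ C : Subgroup A, L ⊓ C = ⊥ ∧ (L ⊔ C).FiniteIndex := by
  obtain ⟨C, hC⟩ := L.exists_maximal_inf_eq_bot
  have := CommGroup.finite_of_fg_isMulTorsion _ (isMulTorsion_quotient_sup hC)
  exact ⟨C, hC.1, finiteIndex_of_finite_quotient⟩

namespace Subgroup

variable {G A Q : Type*} [Group G] [Group A] [Group Q]

def fiberProd (U : Subgroup G) (g : U →* Q) (p : A →* Q) : Subgroup (G × A) where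
  carrier := {x | ∃ h : x.1 ∈ U, g ⟨x.1, h⟩ = p x.2}
  one_mem' := ⟨U.one_mem, (map_one g).trans (map_one p).symm⟩
  mul_mem' := by
    rintro x y ⟨hx, hgx⟩ ⟨hy, hgy⟩
    exact ⟨U.mul_mem hx hy, by simpa [hgx, hgy] using map_mul g ⟨x.1, hx⟩ ⟨y.1, hy⟩⟩
  inv_mem' := by
    rintro x ⟨hx, hgx⟩
    exact ⟨U.inv_mem hx, (map_inv g ⟨x.1, hx⟩).trans (hgx ▸ (map_inv p x.2).symm)⟩

variable {U : Subgroup G} {g : U →* Q} {p : A →* Q}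

theorem mem_fiberProd {x : G × A} : x ∈ U.fiberProd g p ↔ ∃ h : x.1 ∈ U, g ⟨x.1, h⟩ = p x.2 :=
  Iff.rfl

theorem map_fst_fiberProd (hp : Surjective p) : (U.fiberProd g p).map (MonoidHom.fst G A) = U := by
  ext w
  refine ⟨fun ⟨x, ⟨hx, _⟩, hxw⟩ => hxw ▸ hx, fun hw => ?_⟩
  obtain ⟨a, ha⟩ := hp (g ⟨w, hw⟩)
  exact ⟨(w, a), ⟨hw, ha.symm⟩, rfl⟩

theorem comap_inr_fiberProd : (U.fiberProd g p).comap (MonoidHom.inr G A) = p.ker := by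
  ext a
  have : g ⟨1, U.one_mem⟩ = 1 := map_one g
  simp [mem_fiberProd, eq_comm, U.one_mem, this]

theorem finiteIndex_fiberProd [Finite Q] [U.FiniteIndex] : (U.fiberProd g p).FiniteIndex := by
  have hle : (g.ker.map U.subtype).prod p.ker ≤ U.fiberProd g p := by
    rintro ⟨w, a⟩ ⟨⟨u, hu, rfl⟩, ha⟩
    exact ⟨u.2, by simp_all⟩
  have : ((g.ker.map U.subtype).prod p.ker).FiniteIndex := ⟨by
    rw [index_prod, index_map_subtype]
    exact mul_ne_zero (mul_ne_zero FiniteIndex.index_ne_zero FiniteIndex.index_ne_zero)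
      FiniteIndex.index_ne_zero⟩
  exact finiteIndex_of_le hle

noncomputable def sndQuotientOfFst (H : Subgroup (G × A)) (M : Subgroup A) [M.Normal]
    (hM : H.comap (MonoidHom.inr G A) ≤ M) : H.map (MonoidHom.fst G A) →* A ⧸ M :=
  ((MonoidHom.fst G A).subgroupMap H).liftOfSurjective
    ((MonoidHom.fst G A).subgroupMap_surjective H)
    ⟨(QuotientGroup.mk' M).comp ((MonoidHom.snd G A).comp H.subtype), fun x hx => by
      have hx1 : x.1.1 = 1 := congrArg Subtype.val hx
      have : (1, x.1.2) ∈ H := hx1 ▸ x.2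
      simpa using hM this⟩

theorem sndQuotientOfFst_apply {H : Subgroup (G × A)} {M : Subgroup A} [M.Normal]
    (hM : H.comap (MonoidHom.inr G A) ≤ M) {x : G × A} (hx : x ∈ H) :
    H.sndQuotientOfFst M hM ⟨x.1, mem_map_of_mem _ hx⟩ = x.2 :=
  MonoidHom.liftOfRightInverse_comp_apply _ _ _ _ (⟨x, hx⟩ : H)

end Subgroup

theorem Subgroup.FG.map {G G' : Type*} [Group G] [Group G'] {H : Subgroup G} (hH : H.FG)
    (f : G →* G') : (H.map f).FG := by
  classical
  obtain ⟨S, rfl⟩ := hH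
  exact ⟨S.image f, by rw [Finset.coe_image, MonoidHom.map_closure]⟩

/-- **Hall-type theorem.** Every finitely generated subgroup `H` of
`G = Fₙ × A` is a factor of a finite-index subgroup `K ≤ G`: `Kπ` is the internal
free product of `Hπ` and some subgroup `B` (the canonical map `Hπ ∗ B → Kπ` is an
isomorphism), and `L_K` is the internal direct product of `L_H` and some `C ≤ A`. -/
theorem fg_subgroup_is_factor_of_finite_index
    (n : ℕ) (A : Type) [CommGroup A] [Group.FG A]
    (H : Subgroup (FreeGroup (Fin n) × A)) (hH : H.FG) :
    ∃ K : Subgroup (FreeGroup (Fin n) × A), H ≤ K ∧ K.FiniteIndex ∧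
      (∃ (B : Subgroup (FreeGroup (Fin n)))
          (hB : B ≤ K.map (MonoidHom.fst (FreeGroup (Fin n)) A))
          (hHK : H.map (MonoidHom.fst (FreeGroup (Fin n)) A) ≤
            K.map (MonoidHom.fst (FreeGroup (Fin n)) A)),
          Function.Bijective
            (Monoid.Coprod.lift (Subgroup.inclusion hHK) (Subgroup.inclusion hB))) ∧
      ∃ C : Subgroup A,
        H.comap (MonoidHom.inr (FreeGroup (Fin n)) A) ⊔ C =
          K.comap (MonoidHom.inr (FreeGroup (Fin n)) A) ∧
        H.comap (MonoidHom.inr (FreeGroup (Fin n)) A) ⊓ C = ⊥ := by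
  obtain ⟨U, hU, hHU⟩ := (hH.map (MonoidHom.fst _ A)).exists_finiteIndex_isFreeFactor
  obtain ⟨C, hLC, hM⟩ := (H.comap (MonoidHom.inr _ A)).exists_inf_eq_bot_finiteIndex_sup
  obtain ⟨g, hg⟩ := hHU.exists_extend (H.sndQuotientOfFst (_ ⊔ C) le_sup_left)
  refine ⟨U.fiberProd g (QuotientGroup.mk' _), fun x hx => ?_, Subgroup.finiteIndex_fiberProd, ?_,
    C, ?_, hLC⟩
  · exact ⟨hHU.le (Subgroup.mem_map_of_mem _ hx),
      (hg ⟨x.1, _⟩).trans (Subgroup.sndQuotientOfFst_apply _ hx)⟩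
  · rw [Subgroup.map_fst_fiberProd (QuotientGroup.mk'_surjective _)]
    exact hHU
  · rw [Subgroup.comap_inr_fiberProd, QuotientGroup.ker_mk']
end
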